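/- Let α be irrational with convergent denominators (q_k). If α is singular on average, then q_k^{1/k} → ∞. -/

import Mathlib

open Filter MeasureTheory

/-- Distance from a real number to the nearest integer. -/
noncomputable def nint (x : ℝ) : ℝ := |x - round x|

/-- The denominator `q_k` of the `k`-th continued fraction convergent of `α`. -/
noncomputable def cfDen (α : ℝ) (k : ℕ) : ℝ := (GenContFract.of α).dens k

open scoped Classical

/-- `α` is singular on average: for every `c > 0`, the density of those `ℓ ∈ {1,…,N}`
for which `‖qα‖ ≤ c·2^{-ℓ}` has a solution with `0 < q ≤ 2^ℓ` tends to `1`. -/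
noncomputable def SingularOnAverage (α : ℝ) : Prop :=
  ∀ c : ℝ, 0 < c →
    Tendsto (fun N : ℕ =>
      (((Finset.Icc 1 N).filter (fun ℓ : ℕ =>
        ∃ q : ℕ, 0 < q ∧ q ≤ 2 ^ ℓ ∧ nint (q * α) ≤ c * 2 ^ (-(ℓ : ℤ)))).card : ℝ) / N)
      atTop (nhds 1)

/-!
Call `ℓ` good if `‖qα‖ ≤ 2^{-ℓ}/8` for some `0 < q ≤ 2^ℓ`. By Legendre's theorem `p/q` is then a
convergent `p_m/q_m`, with `q_m ≤ q ≤ 2^ℓ` since `p_m, q_m` are coprime, and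
`1/(2q_{m+1}) ≤ ‖q_mα‖ ≤ ‖qα‖` forces `q_{m+1} ≥ 4·2^ℓ`: no denominator lies in `(2^ℓ, 2^{ℓ+1}]`.
As `q_{n+2} ≥ 2q_n`, any block `(2^ℓ, 2^{ℓ+1}]` holds at most two denominators, so
`q_n ≤ 2^{N+1}` forces `n ≤ 2·#{bad ℓ ≤ N} + 3`, which is `o(N)` when `α` is singular on average.
Hence `q_n > 2^{Rn}` eventually, for every `R`.
-/

open Finset GenContFract
open GenContFract (of)

theorem abs_mul_sub_eq_mul_abs_sub_div {x : ℝ} (hx : 0 < x) (a b : ℝ) :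
    |x * a - b| = x * |a - b / x| := by
  rw [← abs_of_pos hx, ← abs_mul, abs_of_pos hx, mul_sub, mul_div_cancel₀ _ hx.ne']

namespace GenContFract

variable {α : ℝ}

theorem not_terminatedAt_of_irrational (hα : Irrational α) (n : ℕ) : ¬(of α).TerminatedAt n :=
  fun h => hα <| by
    obtain ⟨q, hq⟩ := (terminates_iff_rat α).1 ⟨n, h⟩
    exact ⟨q, hq.symm⟩

theorem exists_s_get?_of_irrational (hα : Irrational α) (n : ℕ) :
    ∃ gp, (of α).s.get? n = some gp :=
  Option.ne_none_iff_exists'.1 (not_terminatedAt_of_irrational hα n)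

theorem one_le_dens_of_irrational (hα : Irrational α) (n : ℕ) : 1 ≤ (of α).dens n :=
  calc (1 : ℝ) ≤ Nat.fib (n + 1) := mod_cast Nat.fib_pos.2 n.succ_pos
    _ ≤ (of α).dens n := succ_nth_fib_le_of_nth_den <| by
        cases n with
        | zero => exact Or.inl rfl
        | succ n => exact Or.inr (not_terminatedAt_of_irrational hα n)

theorem dens_pos_of_irrational (hα : Irrational α) (n : ℕ) : 0 < (of α).dens n :=
  one_pos.trans_le (one_le_dens_of_irrational hα n)

theorem two_mul_dens_le_dens_add_two (hα : Irrational α) (n : ℕ) :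
    2 * (of α).dens n ≤ (of α).dens (n + 2) := by
  obtain ⟨gp, hgp⟩ := exists_s_get?_of_irrational hα (n + 1)
  rw [dens_recurrence hgp rfl rfl, (of_partNum_eq_one_and_exists_int_partDen_eq hgp).1, one_mul]
  have hb : 1 ≤ gp.b := of_one_le_get?_partDen (partDen_eq_s_b hgp)
  have hmono : (of α).dens n ≤ (of α).dens (n + 1) := of_den_mono
  nlinarith [one_le_dens_of_irrational hα (n + 1)]

theorem exists_int_contsAux_eq (hα : Irrational α) (n : ℕ) :
    ∃ a b : ℤ, (of α).contsAux n = ⟨a, b⟩ := by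
  induction n using Nat.twoStepInduction with
  | zero => exact ⟨1, 0, by simp⟩
  | one => exact ⟨⌊α⌋, 1, by simp [of_h_eq_floor]⟩
  | more n ih₀ ih₁ =>
    obtain ⟨a₀, b₀, h₀⟩ := ih₀
    obtain ⟨a₁, b₁, h₁⟩ := ih₁
    obtain ⟨gp, hgp⟩ := exists_s_get?_of_irrational hα n
    obtain ⟨ha, z, hz⟩ := of_partNum_eq_one_and_exists_int_partDen_eq hgp
    refine ⟨z * a₁ + a₀, z * b₁ + b₀, ?_⟩
    rw [contsAux_recurrence hgp h₀ h₁, ha, hz]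
    push_cast
    ring_nf

theorem exists_int_nums_dens_eq (hα : Irrational α) (n : ℕ) :
    ∃ a b : ℤ, (of α).nums n = a ∧ (of α).dens n = b := by
  obtain ⟨a, b, h⟩ := exists_int_contsAux_eq hα (n + 1)
  exact ⟨a, b, by rw [num_eq_conts_a, nth_cont_eq_succ_nth_contAux, h],
    by rw [den_eq_conts_b, nth_cont_eq_succ_nth_contAux, h]⟩

theorem determinant_of_irrational (hα : Irrational α) (n : ℕ) :
    (of α).nums n * (of α).dens (n + 1) - (of α).dens n * (of α).nums (n + 1) = (-1) ^ (n + 1) :=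
  (SimpContFract.of α).determinant (not_terminatedAt_of_irrational hα n)

theorem abs_dens_mul_sub_nums_le (hα : Irrational α) (n : ℕ) :
    |(of α).dens n * α - (of α).nums n| ≤ 1 / (of α).dens (n + 1) := by
  have hq := dens_pos_of_irrational hα n
  have h := abs_sub_convs_le (v := α) (not_terminatedAt_of_irrational hα n)
  rw [conv_eq_num_div_den] at h
  calc |(of α).dens n * α - (of α).nums n|
      = (of α).dens n * |α - (of α).nums n / (of α).dens n| :=
        abs_mul_sub_eq_mul_abs_sub_div hq _ _
    _ ≤ (of α).dens n * (1 / ((of α).dens n * (of α).dens (n + 1))) := by gcongr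
    _ = 1 / (of α).dens (n + 1) := by field_simp

theorem one_le_two_mul_dens_succ_mul_abs (hα : Irrational α) (n : ℕ) :
    1 ≤ 2 * (of α).dens (n + 1) * |(of α).dens n * α - (of α).nums n| := by
  set q := (of α).dens
  set e := fun k => (of α).dens k * α - (of α).nums k
  have hq₀ : 1 ≤ q n := one_le_dens_of_irrational hα n
  have hq₁ : 1 ≤ q (n + 1) := one_le_dens_of_irrational hα (n + 1)
  have hq₂ : 1 ≤ q (n + 2) := one_le_dens_of_irrational hα (n + 2)
  have hdet : q (n + 1) * e n - q n * e (n + 1) = (-1) ^ n := by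
    linear_combination (-1 : ℝ) * determinant_of_irrational hα n
  have htri : 1 ≤ q (n + 1) * |e n| + q n * |e (n + 1)| :=
    calc (1 : ℝ) = |q (n + 1) * e n - q n * e (n + 1)| := by simp [hdet]
      _ ≤ |q (n + 1) * e n| + |q n * e (n + 1)| := abs_sub _ _
      _ = q (n + 1) * |e n| + q n * |e (n + 1)| := by
        rw [abs_mul, abs_mul, abs_of_pos (by linarith : 0 < q (n + 1)),
          abs_of_pos (by linarith : 0 < q n)]
  have hnext : q n * |e (n + 1)| ≤ 1 / 2 :=
    calc q n * |e (n + 1)| ≤ q n * (1 / q (n + 2)) := by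
          gcongr; exact abs_dens_mul_sub_nums_le hα (n + 1)
      _ ≤ 1 / 2 := by
          rw [mul_one_div, div_le_iff₀ (by linarith)]
          linarith [two_mul_dens_le_dens_add_two hα n]
  linarith

theorem dens_le_of_convs_eq (hα : Irrational α) {m q : ℕ} {p : ℤ} (hq : 0 < q)
    (h : (of α).convs m = p / q) : (of α).dens m ≤ q := by
  obtain ⟨a, b, ha, hb⟩ := exists_int_nums_dens_eq hα m
  obtain ⟨a', b', ha', hb'⟩ := exists_int_nums_dens_eq hα (m + 1)
  have hb₀ : (0 : ℝ) < b := hb ▸ dens_pos_of_irrational hα m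
  have hdet : a * b' - b * a' = (-1) ^ (m + 1) := by
    have := determinant_of_irrational hα m
    rw [ha, hb, ha', hb'] at this
    exact_mod_cast this
  have hsq : ((-1 : ℤ) ^ (m + 1)) ^ 2 = 1 := by
    rw [← pow_mul, mul_comm, pow_mul, neg_one_sq, one_pow]
  have hcop : IsCoprime b a := ⟨-((-1) ^ (m + 1) * a'), (-1) ^ (m + 1) * b',
    by linear_combination (-1 : ℤ) ^ (m + 1) * hdet + hsq⟩
  have hcross : a * q = p * b := by
    rw [conv_eq_num_div_den, ha, hb, div_eq_div_iff hb₀.ne' (by positivity)] at h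
    exact_mod_cast h
  have hdvd : b ∣ q := hcop.dvd_of_dvd_mul_left ⟨p, by rw [hcross, mul_comm]⟩
  rw [hb]
  exact_mod_cast Int.le_of_dvd (by exact_mod_cast hq) hdvd

theorem exists_dens_le_and_le_dens_succ_of_abs_sub_lt (hα : Irrational α) {q : ℕ} {p : ℤ}
    (hq : 0 < q) (h : |q * α - p| < 1 / (2 * q)) :
    ∃ m, (of α).dens m ≤ q ∧ 1 ≤ 2 * |q * α - p| * (of α).dens (m + 1) := by
  have hq' : (0 : ℝ) < q := by exact_mod_cast hq
  have hqd : |q * α - p| = q * |α - p / q| := abs_mul_sub_eq_mul_abs_sub_div hq' _ _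
  set r : ℚ := Rat.divInt p q
  have hr : (r : ℝ) = p / q := by simp [r, Rat.divInt_eq_div]
  have hr_den : (r.den : ℝ) ≤ q := by
    exact_mod_cast Int.le_of_dvd (by exact_mod_cast hq) (Rat.den_dvd p q)
  have hlegendre : |α - r| < 1 / (2 * (r.den : ℝ) ^ 2) := by
    rw [hr]
    calc |α - p / q| < 1 / (2 * q ^ 2) := by
          rw [hqd, lt_div_iff₀ (by positivity)] at h
          rw [lt_div_iff₀ (by positivity)]
          nlinarith
      _ ≤ 1 / (2 * (r.den : ℝ) ^ 2) := by gcongr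
  obtain ⟨m, hm⟩ := Real.exists_convs_eq_rat hlegendre
  rw [hr] at hm
  have hm_le := dens_le_of_convs_eq hα hq hm
  refine ⟨m, hm_le, ?_⟩
  have hq₀ := dens_pos_of_irrational hα m
  have herr : |(of α).dens m * α - (of α).nums m| ≤ |q * α - p| := by
    rw [hqd, abs_mul_sub_eq_mul_abs_sub_div hq₀, ← conv_eq_num_div_den, hm]
    gcongr
  calc (1 : ℝ) ≤ 2 * (of α).dens (m + 1) * |(of α).dens m * α - (of α).nums m| :=
        one_le_two_mul_dens_succ_mul_abs hα m
    _ ≤ 2 * (of α).dens (m + 1) * |q * α - p| := by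
        have := one_le_dens_of_irrational hα (m + 1)
        gcongr
    _ = 2 * |q * α - p| * (of α).dens (m + 1) := by ring

theorem dens_le_two_pow_of_dens_le_two_pow_succ (hα : Irrational α) {ℓ : ℕ}
    (hℓ : ∃ q : ℕ, 0 < q ∧ q ≤ 2 ^ ℓ ∧ nint (q * α) ≤ 1 / 8 * 2 ^ (-(ℓ : ℤ))) {n : ℕ}
    (hn : (of α).dens n ≤ 2 ^ (ℓ + 1)) : (of α).dens n ≤ 2 ^ ℓ := by
  obtain ⟨q, hq, hqℓ, hnint⟩ := hℓ
  have hqt : (q : ℝ) ≤ 2 ^ ℓ := by exact_mod_cast hqℓ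
  set t : ℝ := 2 ^ ℓ
  have ht : 0 < t := by positivity
  have hq' : (0 : ℝ) < q := by exact_mod_cast hq
  rw [nint, zpow_neg, zpow_natCast] at hnint
  have hlt : |q * α - round (q * α)| < 1 / (2 * q) :=
    calc |q * α - round (q * α)| ≤ 1 / 8 * t⁻¹ := hnint
      _ < 1 / (2 * t) := by field_simp; norm_num
      _ ≤ 1 / (2 * q) := by gcongr
  obtain ⟨m, hm, hm₁⟩ := exists_dens_le_and_le_dens_succ_of_abs_sub_lt hα hq hlt
  have hgap : 4 * t ≤ (of α).dens (m + 1) := by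
    have hD := one_le_dens_of_irrational hα (m + 1)
    have : 1 ≤ 2 * (1 / 8 * t⁻¹) * (of α).dens (m + 1) := hm₁.trans (by gcongr)
    field_simp at this
    linarith
  have hmono : Monotone (of α).dens := monotone_nat_of_le_succ fun _ => of_den_mono
  rcases le_or_gt n m with hnm | hmn
  · exact (hmono hnm).trans (hm.trans hqt)
  · have := hmono (hmn : m + 1 ≤ n)
    rw [pow_succ] at hn
    linarith

end GenContFract

section DyadicBlocks

variable {q : ℕ → ℝ} {P : ℕ → Prop}

theorem le_two_mul_card_filter_not_add_three (hq : ∀ n, 1 ≤ q n) (hq₂ : ∀ n, 2 * q n ≤ q (n + 2))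
    (hP : ∀ ℓ n, P ℓ → q n ≤ 2 ^ (ℓ + 1) → q n ≤ 2 ^ ℓ) (N : ℕ) :
    ∀ n, q n ≤ 2 ^ (N + 1) → n ≤ 2 * #{ℓ ∈ Icc 1 N | ¬P ℓ} + 3 := by
  induction N with
  | zero =>
    intro n hn
    by_contra! h
    obtain ⟨k, rfl⟩ : ∃ k, n = k + 4 := ⟨n - 4, by omega⟩
    linarith [hq₂ k, hq₂ (k + 2), hq k, show (2 : ℝ) ^ (0 + 1) = 2 by norm_num]
  | succ N ih =>
    intro n hn
    have hsub : #{ℓ ∈ Icc 1 N | ¬P ℓ} ≤ #{ℓ ∈ Icc 1 (N + 1) | ¬P ℓ} :=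
      card_le_card (filter_subset_filter _ (Icc_subset_Icc_right (by omega)))
    by_cases hPN : P (N + 1)
    · exact (ih n (hP _ _ hPN hn)).trans (by omega)
    · have hcard : #{ℓ ∈ Icc 1 (N + 1) | ¬P ℓ} = #{ℓ ∈ Icc 1 N | ¬P ℓ} + 1 := by
        rw [← Order.succ_eq_add_one N, ← insert_Icc_right_eq_Icc_succ (by simp), filter_insert,
          Order.succ_eq_add_one, if_pos hPN, card_insert_of_notMem (by simp)]
      by_cases hn₂ : n < 2
      · omega
      obtain ⟨k, rfl⟩ : ∃ k, n = k + 2 := ⟨n - 2, by omega⟩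
      have := ih k (by linarith [hq₂ k, pow_succ (2 : ℝ) (N + 1)])
      omega

theorem exists_card_filter_not_le
    (hP : Tendsto (fun N : ℕ => (#{ℓ ∈ Icc 1 N | P ℓ} : ℝ) / N) atTop (nhds 1)) {ε : ℝ}
    (hε : 0 < ε) : ∃ C : ℝ, ∀ N : ℕ, (#{ℓ ∈ Icc 1 N | ¬P ℓ} : ℝ) ≤ ε * N + C := by
  obtain ⟨N₀, hN₀⟩ := eventually_atTop.1
    ((hP.eventually (lt_mem_nhds (by linarith : 1 - ε < 1))).and (eventually_gt_atTop 0))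
  refine ⟨N₀, fun N => ?_⟩
  have hsplit : (#{ℓ ∈ Icc 1 N | P ℓ} : ℝ) + #{ℓ ∈ Icc 1 N | ¬P ℓ} = N := by
    rw [← Nat.cast_add, card_filter_add_card_filter_not, Nat.card_Icc, Nat.add_sub_cancel]
  rcases lt_or_ge N N₀ with h | h
  · have : (N : ℝ) < N₀ := by exact_mod_cast h
    have : (0 : ℝ) ≤ #{ℓ ∈ Icc 1 N | P ℓ} := by positivity
    nlinarith [(Nat.cast_nonneg N : (0 : ℝ) ≤ N)]
  · obtain ⟨hgood, hN⟩ := hN₀ N h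
    rw [lt_div_iff₀ (by exact_mod_cast hN)] at hgood
    linarith [(Nat.cast_nonneg N₀ : (0 : ℝ) ≤ N₀)]

theorem eventually_two_pow_mul_lt (hq : ∀ n, 1 ≤ q n) (hq₂ : ∀ n, 2 * q n ≤ q (n + 2))
    (hP : ∀ ℓ n, P ℓ → q n ≤ 2 ^ (ℓ + 1) → q n ≤ 2 ^ ℓ)
    (hdens : Tendsto (fun N : ℕ => (#{ℓ ∈ Icc 1 N | P ℓ} : ℝ) / N) atTop (nhds 1)) (R : ℕ) :
    ∀ᶠ n in atTop, (2 : ℝ) ^ (R * n) < q n := by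
  obtain ⟨C, hC⟩ := exists_card_filter_not_le hdens (ε := 1 / (4 * (R + 1))) (by positivity)
  obtain ⟨n₀, hn₀⟩ := exists_nat_gt (4 * C + 6)
  filter_upwards [eventually_gt_atTop n₀] with n hn
  by_contra! hle
  have hcount := le_two_mul_card_filter_not_add_three hq hq₂ hP (R * n) n
    (hle.trans (pow_le_pow_right₀ one_le_two (by omega)))
  have hbad := hC (R * n)
  have hεR : 1 / (4 * (R + 1)) * ((R * n : ℕ) : ℝ) ≤ n / 4 := by
    rw [div_mul_eq_mul_div, one_mul, div_le_div_iff₀ (by positivity) (by norm_num)]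
    push_cast
    nlinarith [(Nat.cast_nonneg n : (0 : ℝ) ≤ n)]
  have hcount' : (n : ℝ) ≤ 2 * #{ℓ ∈ Icc 1 (R * n) | ¬P ℓ} + 3 := by exact_mod_cast hcount
  have : (n₀ : ℝ) < n := by exact_mod_cast hn
  linarith

theorem tendsto_rpow_inv_atTop_of_tendsto_density (hq : ∀ n, 1 ≤ q n)
    (hq₂ : ∀ n, 2 * q n ≤ q (n + 2))
    (hP : ∀ ℓ n, P ℓ → q n ≤ 2 ^ (ℓ + 1) → q n ≤ 2 ^ ℓ)
    (hdens : Tendsto (fun N : ℕ => (#{ℓ ∈ Icc 1 N | P ℓ} : ℝ) / N) atTop (nhds 1)) :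
    Tendsto (fun n : ℕ => q n ^ (n : ℝ)⁻¹) atTop atTop := by
  refine tendsto_atTop.2 fun b => ?_
  obtain ⟨R, hR⟩ := pow_unbounded_of_one_lt b one_lt_two
  filter_upwards [eventually_two_pow_mul_lt hq hq₂ hP hdens R, eventually_gt_atTop 0]
    with n hn hn₀
  calc b ≤ 2 ^ R := hR.le
    _ = (((2 : ℝ) ^ R) ^ n) ^ (n : ℝ)⁻¹ :=
        (Real.pow_rpow_inv_natCast (by positivity) hn₀.ne').symm
    _ ≤ q n ^ (n : ℝ)⁻¹ := by
        rw [← pow_mul]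
        exact Real.rpow_le_rpow (by positivity) hn.le (by positivity)

end DyadicBlocks

theorem stmt9 (α : ℝ) (hα : Irrational α) (hs : SingularOnAverage α) :
    Tendsto (fun k : ℕ => cfDen α k ^ ((k : ℝ)⁻¹)) atTop atTop :=
  tendsto_rpow_inv_atTop_of_tendsto_density (one_le_dens_of_irrational hα)
    (two_mul_dens_le_dens_add_two hα)
    (fun _ _ hℓ => dens_le_two_pow_of_dens_le_two_pow_succ hα hℓ) (hs (1 / 8) (by norm_num))
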